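/- Let n ≥ 5 and let A be the n×n clamped-clamped beam matrix. Then A is symmetric positive definite: A = Aᵗ and xᵗ A x > 0 for every nonzero x ∈ ℝⁿ. -/

import Mathlib

/-!
Let `D` be the `(n + 2) × n` second-difference matrix, whose rows compute `x_k - 2 x_{k-1} + x_{k-2}`
for the zero-extended vector `x`. Then `A = Dᵀ D + e₁ e₁ᵀ + eₙ eₙᵀ`, and `D` is injective because its
top `n × n` block is unit lower triangular; hence `A` is positive definite.
-/

open scoped ENNReal
open Matrix

/-- The `n × n` clamped-clamped beam matrix (1-based index `i' = i+1`). -/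
def A_CC (n : ℕ) : Matrix (Fin n) (Fin n) ℝ :=
  Matrix.of fun i j =>
    let i' := (i : ℕ) + 1
    let j' := (j : ℕ) + 1
    if i' = j' then (if i' = 1 ∨ i' = n then 7 else 6)
    else if j' = i' + 1 ∨ i' = j' + 1 then -4
    else if j' = i' + 2 ∨ i' = j' + 2 then 1
    else 0

def secondDiffMatrix (n : ℕ) : Matrix (Fin (n + 2)) (Fin n) ℝ :=
  of fun k i => if (k : ℕ) = i ∨ (k : ℕ) = i + 2 then 1 else if (k : ℕ) = i + 1 then -2 else 0

lemma sum_secondDiffMatrix_mul {n : ℕ} (i : Fin n) (f : Fin (n + 2) → ℝ) :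
    ∑ k, secondDiffMatrix n k i * f k = f i.castSucc.castSucc - 2 * f i.castSucc.succ + f i.succ.succ := by
  have hcol : ∀ k, secondDiffMatrix n k i = (if k = i.castSucc.castSucc then 1 else 0)
      - 2 * (if k = i.castSucc.succ then 1 else 0) + (if k = i.succ.succ then 1 else 0) := by
    intro k
    simp only [secondDiffMatrix, of_apply, Fin.ext_iff, Fin.val_castSucc, Fin.val_succ]
    split_ifs <;> first | omega | norm_num
  simp only [hcol, add_mul, sub_mul, mul_assoc, ite_mul, one_mul, zero_mul, Finset.sum_add_distrib,
    Finset.sum_sub_distrib, ← Finset.mul_sum, Finset.sum_ite_eq', Finset.mem_univ, if_true]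

lemma secondDiffMatrix_mulVec_injective (n : ℕ) : Function.Injective (secondDiffMatrix n).mulVec := by
  refine (injective_iff_map_eq_zero (secondDiffMatrix n).mulVecLin).mpr fun x hx => ?_
  ext i
  induction i using Fin.strong_induction_on with
  | _ i ih =>
    have hrow := congrFun hx i.castSucc.castSucc
    rw [mulVecLin_apply, mulVec, dotProduct, Finset.sum_eq_single i] at hrow
    · simpa [secondDiffMatrix] using hrow
    · intro j _ hji
      rcases lt_or_gt_of_ne hji with hlt | hgt
      · rw [ih j hlt, Pi.zero_apply, mul_zero]
      · simp only [secondDiffMatrix, of_apply, Fin.val_castSucc]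
        rw [if_neg (by omega), if_neg (by omega), zero_mul]
    · simp

lemma A_CC_eq (n : ℕ) : A_CC n = (secondDiffMatrix n)ᵀ * secondDiffMatrix n +
    diagonal fun i : Fin n => if (i : ℕ) = 0 ∨ (i : ℕ) + 1 = n then 1 else 0 := by
  ext i j
  simp only [Matrix.add_apply, mul_apply, transpose_apply, sum_secondDiffMatrix_mul, diagonal_apply]
  simp only [A_CC, secondDiffMatrix, of_apply, Fin.ext_iff, Fin.val_castSucc, Fin.val_succ]
  split_ifs <;> first | omega | norm_num

lemma A_CC_posDef (n : ℕ) : (A_CC n).PosDef := by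
  rw [A_CC_eq, ← conjTranspose_eq_transpose_of_trivial]
  refine (PosDef.conjTranspose_mul_self _ (secondDiffMatrix_mulVec_injective n)).add_posSemidef
    (PosSemidef.diagonal fun i => ?_)
  dsimp only [Pi.zero_apply]
  split_ifs <;> norm_num

theorem A_CC_symm_posDef_general (n : ℕ) :
    (A_CC n)ᵀ = A_CC n ∧
    ∀ x : Fin n → ℝ, x ≠ 0 → 0 < x ⬝ᵥ (A_CC n).mulVec x := by
  have hA := A_CC_posDef n
  refine ⟨?_, fun x hx => ?_⟩
  · rw [← conjTranspose_eq_transpose_of_trivial]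
    exact hA.isHermitian
  · simpa only [star_trivial] using hA.dotProduct_mulVec_pos hx

/-- The clamped-clamped beam matrix is symmetric positive definite. -/
theorem A_CC_symm_posDef (n : ℕ) (hn : 5 ≤ n) :
    (A_CC n)ᵀ = A_CC n ∧
    ∀ x : Fin n → ℝ, x ≠ 0 → 0 < x ⬝ᵥ (A_CC n).mulVec x :=
  A_CC_symm_posDef_general n
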